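/- Let F : [a,b] × [c,d] → ℝ with F(a,·) = 0, F(·,c) = 0, having finite (p,q)-bivariation, and let {t_i^{(k)}}, {s_j^{(k')}} be nested dyadic-refining partition sequences with mesh bounds 4·2^{-k} and 4·2^{-k'}. Suppose |Δ_iΔ_j G(x_i,y_j)| ≤ C|x_i−x_{i-1}|^{1/p̃}|y_j−y_{j-1}|^{1/q̃} with p̃, q̃ > 1, and α ∈ (0,1) satisfies α/p + 1/p̃ > 1 and (1−α)/q + 1/q̃ > 1. Then for every k ≥ 1, k' ≥ 1, the double difference of the double Riemann–Stieltjes sums satisfies |Δ_1Δ_2 S_{k,k'}| ≤ 4·C·2^{k+k'} (‖F‖_{1;p}/2^{k/p})^α (‖F‖_{2;q}/2^{k'/q})^{1−α} (2^{-k+2})^{1/p̃} (2^{-k'+2})^{1/q̃}, where S_{n,n'} = Σ_{i=1}^{2^n} Σ_{j=1}^{2^{n'}} F(t_i^{(n)}, s_j^{(n')}) Δ_iΔ_j G(t_i^{(n)}, s_j^{(n')}) and Δ_1Δ_2 S_{k,k'} = S_{k,k'} − S_{k-1,k'} − S_{k,k'-1} + S_{k-1,k'-1}. -/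

import Mathlib

open Set

noncomputable section

/-- Rectangular increment of a two-variable function. -/
def rect (H : ℝ → ℝ → ℝ) (x x' y y' : ℝ) : ℝ :=
  H x' y' - H x y' - H x' y + H x y

/-- `t` is a (monotone) partition of `[a,b]`. -/
def IsPartition {n : ℕ} (a b : ℝ) (t : Fin (n + 1) → ℝ) : Prop :=
  Monotone t ∧ t 0 = a ∧ t (Fin.last n) = b

/-- The set of `p`-variation sums of `f` over partitions of `[a,b]`. -/
def pVarSet (p a b : ℝ) (f : ℝ → ℝ) : Set ℝ :=
  {v | ∃ (n : ℕ) (t : Fin (n + 1) → ℝ), IsPartition a b t ∧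
        v = ∑ i : Fin n, |f (t i.succ) - f (t i.castSucc)| ^ p}

/-- The `p`-variation seminorm `‖f‖_{[a,b],p}`. -/
def pVarNorm (p a b : ℝ) (f : ℝ → ℝ) : ℝ :=
  sSup (pVarSet p a b f) ^ (1 / p)

def biVar1Set (p a b c d : ℝ) (F : ℝ → ℝ → ℝ) : Set ℝ :=
  {v | ∃ y₁ ∈ Icc c d, ∃ y₂ ∈ Icc c d, v = pVarNorm p a b (fun x => F x y₁ - F x y₂)}

/-- The first bivariation seminorm `‖F‖_{1;p}`. -/
def biVar1 (p a b c d : ℝ) (F : ℝ → ℝ → ℝ) : ℝ := sSup (biVar1Set p a b c d F)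

def biVar2Set (q a b c d : ℝ) (F : ℝ → ℝ → ℝ) : Set ℝ :=
  {v | ∃ x₁ ∈ Icc a b, ∃ x₂ ∈ Icc a b, v = pVarNorm q c d (fun y => F x₁ y - F x₂ y)}

/-- The second bivariation seminorm `‖F‖_{2;q}`. -/
def biVar2 (q a b c d : ℝ) (F : ℝ → ℝ → ℝ) : ℝ := sSup (biVar2Set q a b c d F)

/-- `‖F‖_{1;p} < ∞`: all the suprema involved are finite. -/
def FiniteBiVar1 (p a b c d : ℝ) (F : ℝ → ℝ → ℝ) : Prop :=
  (∀ y₁ ∈ Icc c d, ∀ y₂ ∈ Icc c d,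
      BddAbove (pVarSet p a b (fun x => F x y₁ - F x y₂))) ∧
  BddAbove (biVar1Set p a b c d F)

/-- `‖F‖_{2;q} < ∞`: all the suprema involved are finite. -/
def FiniteBiVar2 (q a b c d : ℝ) (F : ℝ → ℝ → ℝ) : Prop :=
  (∀ x₁ ∈ Icc a b, ∀ x₂ ∈ Icc a b,
      BddAbove (pVarSet q c d (fun y => F x₁ y - F x₂ y))) ∧
  BddAbove (biVar2Set q a b c d F)


open Finset Real

/-! Since `t (k-1)` is every other point of `t k` (and likewise for `s`), the double difference
`Δ₁Δ₂ S_{k,k'}` collapses to a sum over the cells of the coarse grid of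
(increment of `F` on the odd half-cell) × (increment of `G` on the even half-cell). The `G` factors
are at most `C δ^{1/pt} δ'^{1/qt}` by the Hölder control and the mesh bound. The odd half-cells of
one row are intervals of a partition of `[a,b]`, so by the power-mean inequality a row of `m` of
them contributes at most `m^{1-1/p} ‖F‖_{1;p}`; summing rows gives one bound on `∑ |Δ_iΔ_jF|`,
summing columns gives the analogous one with `‖F‖_{2;q}`, and the sum is at most the geometric
mean of the two with weights `α`, `1-α`. For `m = 2^{k-1}`, `m' = 2^{k'-1}` the resulting power
of two is within the factor `4 · 2^{k+k'}`, because `α/p, (1-α)/q ≤ 1`. -/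

theorem sum_range_two_mul {M : Type*} [AddCommMonoid M] (n : ℕ) (f : ℕ → M) :
    ∑ i ∈ range (2 * n), f i = ∑ i ∈ range n, (f (2 * i) + f (2 * i + 1)) := by
  induction n with
  | zero => simp
  | succ n ih => rw [Nat.mul_succ, sum_range_succ, sum_range_succ, sum_range_succ, ← ih, add_assoc]

def riemannStieltjesSum (F G : ℝ → ℝ → ℝ) (u v : ℕ → ℝ) (m m' : ℕ) : ℝ :=
  ∑ i ∈ range m, ∑ j ∈ range m',
    F (u (i + 1)) (v (j + 1)) * rect G (u i) (u (i + 1)) (v j) (v (j + 1))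

theorem riemannStieltjesSum_congr {F G : ℝ → ℝ → ℝ} {u u' v v' : ℕ → ℝ} {m m' : ℕ}
    (hu : ∀ i ≤ m, u i = u' i) (hv : ∀ j ≤ m', v j = v' j) :
    riemannStieltjesSum F G u v m m' = riemannStieltjesSum F G u' v' m m' :=
  sum_congr rfl fun i hi => sum_congr rfl fun j hj => by
    rw [Finset.mem_range] at hi hj
    rw [hu i hi.le, hu (i + 1) hi, hv j hj.le, hv (j + 1) hj]

theorem riemannStieltjesSum_double_diff (F G : ℝ → ℝ → ℝ) {u u' v v' : ℕ → ℝ} {m m' : ℕ}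
    (hu : ∀ i ≤ m, u (2 * i) = u' i) (hv : ∀ j ≤ m', v (2 * j) = v' j) :
    riemannStieltjesSum F G u v (2 * m) (2 * m') - riemannStieltjesSum F G u' v m (2 * m')
      - riemannStieltjesSum F G u v' (2 * m) m' + riemannStieltjesSum F G u' v' m m' =
    ∑ i ∈ range m, ∑ j ∈ range m',
      rect F (u (2 * i + 1)) (u (2 * i + 2)) (v (2 * j + 1)) (v (2 * j + 2)) *
        rect G (u (2 * i)) (u (2 * i + 1)) (v (2 * j)) (v (2 * j + 1)) := by
  rw [← riemannStieltjesSum_congr (fun i hi => hu i hi) (fun _ _ => rfl),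
    ← riemannStieltjesSum_congr (fun _ _ => rfl) (fun j hj => hv j hj),
    ← riemannStieltjesSum_congr (fun i hi => hu i hi) (fun j hj => hv j hj)]
  simp only [riemannStieltjesSum, sum_range_two_mul, ← sum_sub_distrib, ← sum_add_distrib]
  refine sum_congr rfl fun i _ => sum_congr rfl fun j _ => ?_
  simp only [rect, Nat.mul_add, Nat.mul_one]
  ring

theorem IsPartition.of_forall_le {a b : ℝ} {n : ℕ} {u : ℕ → ℝ}
    (hmono : ∀ i j, i ≤ j → j ≤ n → u i ≤ u j) (h0 : u 0 = a) (hn : u n = b) :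
    IsPartition a b (fun i : Fin (n + 1) => u i) :=
  ⟨fun i j hij => hmono i j hij (Nat.lt_succ_iff.mp j.isLt), h0, hn⟩

namespace IsPartition

variable {a b : ℝ} {n : ℕ} {u : ℕ → ℝ}

theorem apply_le_apply (hu : IsPartition a b (fun i : Fin (n + 1) => u i)) {i j : ℕ} (hij : i ≤ j)
    (hj : j ≤ n) : u i ≤ u j :=
  hu.1 (show (⟨i, by omega⟩ : Fin (n + 1)) ≤ ⟨j, by omega⟩ from hij)

theorem mem_Icc (hu : IsPartition a b (fun i : Fin (n + 1) => u i)) {i : ℕ} (hi : i ≤ n) :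
    u i ∈ Icc a b :=
  ⟨hu.2.1 ▸ hu.apply_le_apply (Nat.zero_le i) hi, hu.2.2 ▸ hu.apply_le_apply hi le_rfl⟩

theorem left_le_right (hu : IsPartition a b (fun i : Fin (n + 1) => u i)) : a ≤ b :=
  hu.2.1 ▸ hu.2.2 ▸ hu.apply_le_apply (Nat.zero_le n) le_rfl

theorem sum_rpow_mem_pVarSet (hu : IsPartition a b (fun i : Fin (n + 1) => u i)) (p : ℝ)
    (g : ℝ → ℝ) : ∑ i ∈ range n, |g (u (i + 1)) - g (u i)| ^ p ∈ pVarSet p a b g :=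
  ⟨n, _, hu, by rw [← Fin.sum_univ_eq_sum_range]; simp⟩

end IsPartition

theorem pVarNorm_nonneg {p a b : ℝ} {f : ℝ → ℝ} (hab : a ≤ b) (hf : BddAbove (pVarSet p a b f)) :
    0 ≤ pVarNorm p a b f := by
  have hmem : |f b - f a| ^ p ∈ pVarSet p a b f :=
    ⟨1, ![a, b], ⟨Fin.monotone_iff_le_succ.2 fun i => by fin_cases i; simpa using hab, rfl, rfl⟩,
      by simp⟩
  exact rpow_nonneg ((rpow_nonneg (abs_nonneg _) _).trans (le_csSup hf hmem)) _

theorem biVar1_nonneg {p a b c d : ℝ} {F : ℝ → ℝ → ℝ} (hab : a ≤ b) (hcd : c ≤ d)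
    (hF : FiniteBiVar1 p a b c d F) : 0 ≤ biVar1 p a b c d F :=
  have hc : c ∈ Icc c d := left_mem_Icc.2 hcd
  (pVarNorm_nonneg hab (hF.1 c hc c hc)).trans (le_csSup hF.2 ⟨c, hc, c, hc, rfl⟩)

theorem biVar2_nonneg {q a b c d : ℝ} {F : ℝ → ℝ → ℝ} (hab : a ≤ b) (hcd : c ≤ d)
    (hF : FiniteBiVar2 q a b c d F) : 0 ≤ biVar2 q a b c d F :=
  have ha : a ∈ Icc a b := left_mem_Icc.2 hab
  (pVarNorm_nonneg hcd (hF.1 a ha a ha)).trans (le_csSup hF.2 ⟨a, ha, a, ha, rfl⟩)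

theorem rpow_sum_odd_le_pVarNorm {p a b : ℝ} (hp : 0 < p) {m : ℕ} {u : ℕ → ℝ}
    (hu : IsPartition a b (fun i : Fin (2 * m + 1) => u i)) {g : ℝ → ℝ}
    (hg : BddAbove (pVarSet p a b g)) :
    (∑ i ∈ range m, |g (u (2 * i + 2)) - g (u (2 * i + 1))| ^ p) ^ (1 / p) ≤ pVarNorm p a b g := by
  have hodd : ∑ i ∈ range m, |g (u (2 * i + 2)) - g (u (2 * i + 1))| ^ p ≤
      ∑ i ∈ range (2 * m), |g (u (i + 1)) - g (u i)| ^ p := by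
    rw [sum_range_two_mul]
    exact sum_le_sum fun i _ => le_add_of_nonneg_left (by positivity)
  exact rpow_le_rpow (by positivity) (hodd.trans (le_csSup hg (hu.sum_rpow_mem_pVarSet p g)))
    (by positivity)

theorem rpow_sum_abs_rect_le_biVar1 {p a b c d : ℝ} (hp : 0 < p) {F : ℝ → ℝ → ℝ}
    (hF : FiniteBiVar1 p a b c d F) {m : ℕ} {u : ℕ → ℝ}
    (hu : IsPartition a b (fun i : Fin (2 * m + 1) => u i)) {y y' : ℝ} (hy : y ∈ Icc c d)
    (hy' : y' ∈ Icc c d) :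
    (∑ i ∈ range m, |rect F (u (2 * i + 1)) (u (2 * i + 2)) y y'| ^ p) ^ (1 / p) ≤
      biVar1 p a b c d F := by
  have hrect : ∀ x x', rect F x x' y y' = (F x' y' - F x' y) - (F x y' - F x y) :=
    fun _ _ => by unfold rect; ring
  simp only [hrect]
  exact (rpow_sum_odd_le_pVarNorm hp hu (hF.1 y' hy' y hy)).trans
    (le_csSup hF.2 ⟨y', hy', y, hy, rfl⟩)

theorem rpow_sum_abs_rect_le_biVar2 {q a b c d : ℝ} (hq : 0 < q) {F : ℝ → ℝ → ℝ}
    (hF : FiniteBiVar2 q a b c d F) {m : ℕ} {v : ℕ → ℝ}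
    (hv : IsPartition c d (fun j : Fin (2 * m + 1) => v j)) {x x' : ℝ} (hx : x ∈ Icc a b)
    (hx' : x' ∈ Icc a b) :
    (∑ j ∈ range m, |rect F x x' (v (2 * j + 1)) (v (2 * j + 2))| ^ q) ^ (1 / q) ≤
      biVar2 q a b c d F := by
  have hrect : ∀ y y', rect F x x' y y' = (F x' y' - F x y') - (F x' y - F x y) :=
    fun _ _ => by unfold rect; ring
  simp only [hrect]
  exact (rpow_sum_odd_le_pVarNorm hq hv (hF.1 x' hx' x hx)).trans
    (le_csSup hF.2 ⟨x', hx', x, hx, rfl⟩)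

theorem sum_sum_le_of_rpow_sum_le {ι κ : Type*} (s : Finset ι) (t : Finset κ) {X : ι → κ → ℝ}
    (hX : ∀ i j, 0 ≤ X i j) {p V : ℝ} (hp : 1 ≤ p)
    (hV : ∀ j ∈ t, (∑ i ∈ s, X i j ^ p) ^ (1 / p) ≤ V) :
    ∑ i ∈ s, ∑ j ∈ t, X i j ≤ #t * ((#s : ℝ) ^ (1 - 1 / p) * V) := by
  rw [sum_comm, ← nsmul_eq_mul]
  refine sum_le_card_nsmul _ _ _ fun j hj => ?_
  have hholder := inner_le_weight_mul_Lp_of_nonneg s hp (fun _ => 1) (X · j) (fun _ => zero_le_one)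
    (fun i => hX i j)
  simp only [one_mul, sum_const, nsmul_one, ← one_div] at hholder
  exact hholder.trans (mul_le_mul_of_nonneg_left (hV j hj) (by positivity))

theorem le_rpow_mul_rpow_of_le_of_le {x A B α : ℝ} (hx : 0 ≤ x) (hA : x ≤ A) (hB : x ≤ B)
    (hα0 : 0 ≤ α) (hα1 : α ≤ 1) : x ≤ A ^ α * B ^ (1 - α) :=
  calc x = x ^ α * x ^ (1 - α) := by rw [← rpow_add' hx (by norm_num), add_sub_cancel, rpow_one]
    _ ≤ A ^ α * B ^ (1 - α) :=
        mul_le_mul (rpow_le_rpow hx hA hα0) (rpow_le_rpow hx hB (by linarith)) (by positivity)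
          (rpow_nonneg (hx.trans hA) _)

theorem abs_sum_sum_mul_le {ι κ : Type*} (s : Finset ι) (t : Finset κ) (f g : ι → κ → ℝ)
    {K : ℝ} (hg : ∀ i ∈ s, ∀ j ∈ t, |g i j| ≤ K) :
    |∑ i ∈ s, ∑ j ∈ t, f i j * g i j| ≤ K * ∑ i ∈ s, ∑ j ∈ t, |f i j| := by
  rw [mul_sum]
  refine (abs_sum_le_sum_abs _ _).trans (sum_le_sum fun i hi => ?_)
  rw [mul_sum]
  refine (abs_sum_le_sum_abs _ _).trans (sum_le_sum fun j hj => ?_)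
  rw [abs_mul, mul_comm K]
  exact mul_le_mul_of_nonneg_left (hg i hi j hj) (abs_nonneg _)

theorem two_rpow_weight_le {p q α V₁ V₂ : ℝ} (hp : 1 ≤ p) (hq : 1 ≤ q) (hα0 : 0 ≤ α)
    (hα1 : α ≤ 1) (hV₁ : 0 ≤ V₁) (hV₂ : 0 ≤ V₂) (x y : ℝ) :
    ((2 : ℝ) ^ (y - 1) * (((2 : ℝ) ^ (x - 1)) ^ (1 - 1 / p) * V₁)) ^ α *
      ((2 : ℝ) ^ (x - 1) * (((2 : ℝ) ^ (y - 1)) ^ (1 - 1 / q) * V₂)) ^ (1 - α) ≤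
    (2 : ℝ) ^ (2 + (x + y)) * (V₁ / 2 ^ (x / p)) ^ α * (V₂ / 2 ^ (y / q)) ^ (1 - α) := by
  have h2 : (0 : ℝ) ≤ 2 := zero_le_two
  have hL : ((2 : ℝ) ^ (y - 1) * (((2 : ℝ) ^ (x - 1)) ^ (1 - 1 / p) * V₁)) ^ α *
      ((2 : ℝ) ^ (x - 1) * (((2 : ℝ) ^ (y - 1)) ^ (1 - 1 / q) * V₂)) ^ (1 - α) =
      2 ^ ((y - 1 + (x - 1) * (1 - 1 / p)) * α + (x - 1 + (y - 1) * (1 - 1 / q)) * (1 - α)) *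
        (V₁ ^ α * V₂ ^ (1 - α)) := by
    rw [← rpow_mul h2, ← rpow_mul h2, ← mul_assoc, ← mul_assoc, ← rpow_add two_pos,
      ← rpow_add two_pos, mul_rpow (by positivity) hV₁, mul_rpow (by positivity) hV₂,
      ← rpow_mul h2, ← rpow_mul h2, rpow_add two_pos]
    ring
  have hR : (2 : ℝ) ^ (2 + (x + y)) * (V₁ / 2 ^ (x / p)) ^ α * (V₂ / 2 ^ (y / q)) ^ (1 - α) =
      2 ^ (2 + (x + y) - x / p * α - y / q * (1 - α)) * (V₁ ^ α * V₂ ^ (1 - α)) := by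
    rw [div_rpow hV₁ (by positivity), div_rpow hV₂ (by positivity), ← rpow_mul h2,
      ← rpow_mul h2, rpow_sub two_pos, rpow_sub two_pos]
    ring
  have hαp : α / p ≤ 1 := (div_le_one (by positivity)).2 (by linarith)
  have hαq : (1 - α) / q ≤ 1 := (div_le_one (by positivity)).2 (by linarith)
  rw [hL, hR]
  gcongr
  · exact one_le_two
  · linarith [show 2 + (x + y) - x / p * α - y / q * (1 - α) -
      ((y - 1 + (x - 1) * (1 - 1 / p)) * α + (x - 1 + (y - 1) * (1 - 1 / q)) * (1 - α)) =
      4 - α / p - (1 - α) / q by ring]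

theorem abs_rect_le_of_mesh {a b c d C pt qt δ δ' : ℝ} {G : ℝ → ℝ → ℝ} (hC : 0 ≤ C)
    (hpt : 0 ≤ pt) (hqt : 0 ≤ qt)
    (hG : ∀ x₁ x₂ y₁ y₂ : ℝ, a ≤ x₁ → x₁ ≤ x₂ → x₂ ≤ b → c ≤ y₁ → y₁ ≤ y₂ → y₂ ≤ d →
      |rect G x₁ x₂ y₁ y₂| ≤ C * (x₂ - x₁) ^ (1 / pt) * (y₂ - y₁) ^ (1 / qt))
    {n n' : ℕ} {u v : ℕ → ℝ} (hu : IsPartition a b (fun i : Fin (n + 1) => u i))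
    (hv : IsPartition c d (fun j : Fin (n' + 1) => v j))
    (hδ : ∀ i < n, u (i + 1) - u i ≤ δ) (hδ' : ∀ j < n', v (j + 1) - v j ≤ δ')
    {i j : ℕ} (hi : i < n) (hj : j < n') :
    |rect G (u i) (u (i + 1)) (v j) (v (j + 1))| ≤ C * δ ^ (1 / pt) * δ' ^ (1 / qt) := by
  have hui := hu.apply_le_apply (Nat.le_succ i) hi
  have hvj := hv.apply_le_apply (Nat.le_succ j) hj
  refine (hG _ _ _ _ (hu.mem_Icc hi.le).1 hui (hu.mem_Icc hi).2 (hv.mem_Icc hj.le).1 hvj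
    (hv.mem_Icc hj).2).trans ?_
  gcongr
  · exact mul_nonneg hC (rpow_nonneg ((sub_nonneg.2 hui).trans (hδ i hi)) _)
  · exact hδ i hi
  · exact hδ' j hj

theorem sum_sum_abs_rect_le_biVar {p q a b c d α : ℝ} (hp : 1 ≤ p) (hq : 1 ≤ q) (hα0 : 0 ≤ α)
    (hα1 : α ≤ 1) {F : ℝ → ℝ → ℝ} (hF1 : FiniteBiVar1 p a b c d F)
    (hF2 : FiniteBiVar2 q a b c d F) {m m' : ℕ} {u v : ℕ → ℝ}
    (hu : IsPartition a b (fun i : Fin (2 * m + 1) => u i))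
    (hv : IsPartition c d (fun j : Fin (2 * m' + 1) => v j)) :
    ∑ i ∈ range m, ∑ j ∈ range m',
        |rect F (u (2 * i + 1)) (u (2 * i + 2)) (v (2 * j + 1)) (v (2 * j + 2))| ≤
      ((m' : ℝ) * ((m : ℝ) ^ (1 - 1 / p) * biVar1 p a b c d F)) ^ α *
        ((m : ℝ) * ((m' : ℝ) ^ (1 - 1 / q) * biVar2 q a b c d F)) ^ (1 - α) := by
  have hrows := sum_sum_le_of_rpow_sum_le (range m) (range m') (fun _ _ => abs_nonneg _) hp
    fun j hj => rpow_sum_abs_rect_le_biVar1 (by linarith) hF1 hu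
      (hv.mem_Icc (i := 2 * j + 1) (by rw [Finset.mem_range] at hj; omega))
      (hv.mem_Icc (i := 2 * j + 2) (by rw [Finset.mem_range] at hj; omega))
  have hcols := sum_sum_le_of_rpow_sum_le (range m') (range m) (fun _ _ => abs_nonneg _) hq
    fun i hi => rpow_sum_abs_rect_le_biVar2 (by linarith) hF2 hv
      (hu.mem_Icc (i := 2 * i + 1) (by rw [Finset.mem_range] at hi; omega))
      (hu.mem_Icc (i := 2 * i + 2) (by rw [Finset.mem_range] at hi; omega))
  rw [sum_comm] at hcols
  simp only [card_range] at hrows hcols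
  exact le_rpow_mul_rpow_of_le_of_le
    (sum_nonneg fun _ _ => sum_nonneg fun _ _ => abs_nonneg _) hrows hcols hα0 hα1

theorem sum_sum_abs_rect_le_two_pow {p q a b c d α : ℝ} (hp : 1 ≤ p) (hq : 1 ≤ q) (hα0 : 0 ≤ α)
    (hα1 : α ≤ 1) {F : ℝ → ℝ → ℝ} (hF1 : FiniteBiVar1 p a b c d F)
    (hF2 : FiniteBiVar2 q a b c d F) {k k' : ℕ} (hk : 1 ≤ k) (hk' : 1 ≤ k') {u v : ℕ → ℝ}
    (hu : IsPartition a b (fun i : Fin (2 * 2 ^ (k - 1) + 1) => u i))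
    (hv : IsPartition c d (fun j : Fin (2 * 2 ^ (k' - 1) + 1) => v j)) :
    ∑ i ∈ range (2 ^ (k - 1)), ∑ j ∈ range (2 ^ (k' - 1)),
        |rect F (u (2 * i + 1)) (u (2 * i + 2)) (v (2 * j + 1)) (v (2 * j + 2))| ≤
      4 * 2 ^ (k + k') * (biVar1 p a b c d F / (2 : ℝ) ^ ((k : ℝ) / p)) ^ α *
        (biVar2 q a b c d F / (2 : ℝ) ^ ((k' : ℝ) / q)) ^ (1 - α) := by
  have hcast : ∀ n : ℕ, 1 ≤ n → ((2 ^ (n - 1) : ℕ) : ℝ) = (2 : ℝ) ^ ((n : ℝ) - 1) :=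
    fun n hn => by rw [← Nat.cast_one (R := ℝ), ← Nat.cast_sub hn, rpow_natCast]; push_cast; rfl
  have h4 : (4 : ℝ) * 2 ^ (k + k') = 2 ^ (2 + ((k : ℝ) + k')) := by
    rw [rpow_add two_pos, ← Nat.cast_add, rpow_natCast]; norm_num
  refine (sum_sum_abs_rect_le_biVar hp hq hα0 hα1 hF1 hF2 hu hv).trans ?_
  rw [hcast k hk, hcast k' hk', h4]
  exact two_rpow_weight_le hp hq hα0 hα1 (biVar1_nonneg hu.left_le_right hv.left_le_right hF1)
    (biVar2_nonneg hu.left_le_right hv.left_le_right hF2) _ _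

theorem young_dyadic_level_estimate_general
    (a b c d p q pt qt C α : ℝ)
    (hp : 1 ≤ p) (hq : 1 ≤ q) (hpt : 1 < pt) (hqt : 1 < qt) (hC : 0 < C)
    (hα0 : 0 < α) (hα1 : α < 1)
    (F G : ℝ → ℝ → ℝ)
    (hF1 : FiniteBiVar1 p a b c d F) (hF2 : FiniteBiVar2 q a b c d F)
    (hG : ∀ x₁ x₂ y₁ y₂ : ℝ, a ≤ x₁ → x₁ ≤ x₂ → x₂ ≤ b → c ≤ y₁ → y₁ ≤ y₂ → y₂ ≤ d →
      |rect G x₁ x₂ y₁ y₂| ≤ C * (x₂ - x₁) ^ (1 / pt) * (y₂ - y₁) ^ (1 / qt))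
    (M M' : ℕ) (t s : ℕ → ℕ → ℝ)
    (ht0 : ∀ k ≤ M, (∀ i j : ℕ, i ≤ j → j ≤ 2 ^ k → t k i ≤ t k j) ∧
      t k 0 = a ∧ t k (2 ^ k) = b)
    (htmesh : ∀ k ≤ M, ∀ i < 2 ^ k, t k (i + 1) - t k i < 4 / 2 ^ k)
    (htnest : ∀ k, 1 ≤ k → k ≤ M → ∀ i ≤ 2 ^ (k - 1), t k (2 * i) = t (k - 1) i)
    (hs0 : ∀ k' ≤ M', (∀ i j : ℕ, i ≤ j → j ≤ 2 ^ k' → s k' i ≤ s k' j) ∧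
      s k' 0 = c ∧ s k' (2 ^ k') = d)
    (hsmesh : ∀ k' ≤ M', ∀ j < 2 ^ k', s k' (j + 1) - s k' j < 4 / 2 ^ k')
    (hsnest : ∀ k', 1 ≤ k' → k' ≤ M' → ∀ j ≤ 2 ^ (k' - 1), s k' (2 * j) = s (k' - 1) j)
    (S : ℕ → ℕ → ℝ)
    (hS : ∀ n n' : ℕ, S n n' =
      ∑ i ∈ Finset.range (2 ^ n), ∑ j ∈ Finset.range (2 ^ n'),
        F (t n (i + 1)) (s n' (j + 1)) *
          rect G (t n i) (t n (i + 1)) (s n' j) (s n' (j + 1)))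
    (k k' : ℕ) (hk : 1 ≤ k) (hkM : k ≤ M) (hk' : 1 ≤ k') (hk'M : k' ≤ M') :
    |S k k' - S (k - 1) k' - S k (k' - 1) + S (k - 1) (k' - 1)| ≤
      4 * C * 2 ^ (k + k') *
        (biVar1 p a b c d F / (2 : ℝ) ^ ((k : ℝ) / p)) ^ α *
        (biVar2 q a b c d F / (2 : ℝ) ^ ((k' : ℝ) / q)) ^ (1 - α) *
        ((2 : ℝ) ^ ((2 : ℝ) - (k : ℝ))) ^ (1 / pt) *
        ((2 : ℝ) ^ ((2 : ℝ) - (k' : ℝ))) ^ (1 / qt) := by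
  have h2k : 2 ^ k = 2 * 2 ^ (k - 1) := by rw [← pow_succ', Nat.sub_add_cancel hk]
  have h2k' : 2 ^ k' = 2 * 2 ^ (k' - 1) := by rw [← pow_succ', Nat.sub_add_cancel hk']
  have hmesh : ∀ n : ℕ, (4 : ℝ) / 2 ^ n = 2 ^ ((2 : ℝ) - n) := fun n => by
    rw [rpow_sub two_pos, rpow_natCast]; norm_num
  obtain ⟨htm, hta, htb⟩ := ht0 k hkM
  obtain ⟨hsm, hsc, hsd⟩ := hs0 k' hk'M
  rw [h2k] at htm htb
  rw [h2k'] at hsm hsd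
  have hu := IsPartition.of_forall_le htm hta htb
  have hv := IsPartition.of_forall_le hsm hsc hsd
  have hδ : ∀ i < 2 * 2 ^ (k - 1), t k (i + 1) - t k i ≤ 2 ^ ((2 : ℝ) - k) :=
    fun i hi => hmesh k ▸ (htmesh k hkM i (h2k ▸ hi)).le
  have hδ' : ∀ j < 2 * 2 ^ (k' - 1), s k' (j + 1) - s k' j ≤ 2 ^ ((2 : ℝ) - k') :=
    fun j hj => hmesh k' ▸ (hsmesh k' hk'M j (h2k' ▸ hj)).le
  have hS' : ∀ n n', S n n' = riemannStieltjesSum F G (t n) (s n') (2 ^ n) (2 ^ n') := hS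
  rw [hS', hS', hS', hS', h2k, h2k',
    riemannStieltjesSum_double_diff F G (htnest k hk hkM) (hsnest k' hk' hk'M)]
  refine (abs_sum_sum_mul_le _ _ _ _ fun i hi j hj =>
    abs_rect_le_of_mesh hC.le (by linarith) (by linarith) hG hu hv hδ hδ'
      (by rw [Finset.mem_range] at hi; omega) (by rw [Finset.mem_range] at hj; omega)).trans ?_
  refine (mul_le_mul_of_nonneg_left
    (sum_sum_abs_rect_le_two_pow hp hq hα0.le hα1.le hF1 hF2 hk hk' hu hv) ?_).trans_eq (by ring)
  positivity

/-- per-level bound for the double difference of the dyadic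
double Riemann–Stieltjes sums, with `ρ(u) = u^α`, `σ(u) = u^{1-α}` and a
Hölder-type control on `G`. -/
theorem young_dyadic_level_estimate
    (a b c d p q pt qt C α : ℝ) (hab : a < b) (hcd : c < d)
    (hp : 1 ≤ p) (hq : 1 ≤ q) (hpt : 1 < pt) (hqt : 1 < qt) (hC : 0 < C)
    (hα0 : 0 < α) (hα1 : α < 1)
    (h₁ : α / p + 1 / pt > 1) (h₂ : (1 - α) / q + 1 / qt > 1)
    (F G : ℝ → ℝ → ℝ)
    (hFa : ∀ y ∈ Icc c d, F a y = 0) (hFc : ∀ x ∈ Icc a b, F x c = 0)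
    (hF1 : FiniteBiVar1 p a b c d F) (hF2 : FiniteBiVar2 q a b c d F)
    (hG : ∀ x₁ x₂ y₁ y₂ : ℝ, a ≤ x₁ → x₁ ≤ x₂ → x₂ ≤ b → c ≤ y₁ → y₁ ≤ y₂ → y₂ ≤ d →
      |rect G x₁ x₂ y₁ y₂| ≤ C * (x₂ - x₁) ^ (1 / pt) * (y₂ - y₁) ^ (1 / qt))
    (M M' : ℕ) (t s : ℕ → ℕ → ℝ)
    (ht0 : ∀ k ≤ M, (∀ i j : ℕ, i ≤ j → j ≤ 2 ^ k → t k i ≤ t k j) ∧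
      t k 0 = a ∧ t k (2 ^ k) = b)
    (htmesh : ∀ k ≤ M, ∀ i < 2 ^ k, t k (i + 1) - t k i < 4 / 2 ^ k)
    (htnest : ∀ k, 1 ≤ k → k ≤ M → ∀ i ≤ 2 ^ (k - 1), t k (2 * i) = t (k - 1) i)
    (hs0 : ∀ k' ≤ M', (∀ i j : ℕ, i ≤ j → j ≤ 2 ^ k' → s k' i ≤ s k' j) ∧
      s k' 0 = c ∧ s k' (2 ^ k') = d)
    (hsmesh : ∀ k' ≤ M', ∀ j < 2 ^ k', s k' (j + 1) - s k' j < 4 / 2 ^ k')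
    (hsnest : ∀ k', 1 ≤ k' → k' ≤ M' → ∀ j ≤ 2 ^ (k' - 1), s k' (2 * j) = s (k' - 1) j)
    (S : ℕ → ℕ → ℝ)
    (hS : ∀ n n' : ℕ, S n n' =
      ∑ i ∈ Finset.range (2 ^ n), ∑ j ∈ Finset.range (2 ^ n'),
        F (t n (i + 1)) (s n' (j + 1)) *
          rect G (t n i) (t n (i + 1)) (s n' j) (s n' (j + 1)))
    (k k' : ℕ) (hk : 1 ≤ k) (hkM : k ≤ M) (hk' : 1 ≤ k') (hk'M : k' ≤ M') :
    |S k k' - S (k - 1) k' - S k (k' - 1) + S (k - 1) (k' - 1)| ≤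
      4 * C * 2 ^ (k + k') *
        (biVar1 p a b c d F / (2 : ℝ) ^ ((k : ℝ) / p)) ^ α *
        (biVar2 q a b c d F / (2 : ℝ) ^ ((k' : ℝ) / q)) ^ (1 - α) *
        ((2 : ℝ) ^ ((2 : ℝ) - (k : ℝ))) ^ (1 / pt) *
        ((2 : ℝ) ^ ((2 : ℝ) - (k' : ℝ))) ^ (1 / qt) :=
  young_dyadic_level_estimate_general a b c d p q pt qt C α hp hq hpt hqt hC hα0 hα1 F G hF1 hF2 hG
    M M' t s ht0 htmesh htnest hs0 hsmesh hsnest S hS k k' hk hkM hk' hk'M
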